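/- arXiv:1708.01219 — 3 statements merged into one kernel-verified Lean document; each statement's English description precedes it below -/
import Mathlib

section
/- Let G be a symmetric 2×2 integer matrix which is positive definite (vᵀGv > 0 for every nonzero integer vector v) and whose diagonal entries G₀₀ and G₁₁ are even. Then there exists exactly one triple of integers (a,b,c) with 0 < a ≤ c, 0 ≤ 2b ≤ a, a even and c even, such that some integer matrix M with det M = ±1 satisfies Mᵀ G M = [[a, b], [b, c]]. -/
/-!
Existence is Lagrange's reduction. Among the Gram matrices `!![a, b; b, c]` congruent to `G`
choose one with `a` minimal; diagonal entries of congruent Gram matrices are values of the form at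
nonzero vectors, hence positive. A shear followed by a sign change moves `b` into `[0, a / 2]`
without changing `a`, and swapping the two basis vectors shows `a ≤ c` by minimality.

Uniqueness: for a reduced form `a x² + 2 b x y + c y² ≥ a (x² - |x y| + y²) + (c - a) y²`, so
`a` is the least value on nonzero vectors and `c` the least value on vectors with `y ≠ 0`.
Reading this off the columns of a change of basis between two reduced forms gives `a = a'` and
`c = c'`, and the invariant `a c - b²` then gives `b = b'`. Evenness of `a` and `c` holds because
all values of an even form are even.
-/

open Matrix

namespace Matrix

theorem IsSymm.eq_fin_two {α : Type*} {G : Matrix (Fin 2) (Fin 2) α} (hG : G.IsSymm) :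
    G = !![G 0 0, G 0 1; G 0 1, G 1 1] := by
  have := eta_fin_two G
  rwa [hG.apply 0 1] at this

variable {n R : Type*} [Fintype n] [CommRing R]

theorem transpose_mul_mul_apply (M G : Matrix n n R) (i j : n) :
    (Mᵀ * G * M) i j = Mᵀ i ⬝ᵥ G *ᵥ Mᵀ j := by
  rw [mul_apply', dotProduct_mulVec]
  rfl

variable [DecidableEq n]

def IsCongruent (G G' : Matrix n n R) : Prop :=
  ∃ M : Matrix n n R, IsUnit M.det ∧ Mᵀ * G * M = G'

namespace IsCongruent

theorem refl (G : Matrix n n R) : IsCongruent G G :=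
  ⟨1, by simp, by simp⟩

theorem symm {G G' : Matrix n n R} (h : IsCongruent G G') : IsCongruent G' G := by
  obtain ⟨M, hM, rfl⟩ := h
  refine ⟨M⁻¹, (isUnit_nonsing_inv_det_iff).2 hM, ?_⟩
  rw [transpose_nonsing_inv, Matrix.mul_assoc, Matrix.mul_assoc, mul_nonsing_inv _ hM,
    Matrix.mul_one, ← Matrix.mul_assoc, nonsing_inv_mul _ ((det_transpose M).symm ▸ hM),
    Matrix.one_mul]

theorem trans {G G' G'' : Matrix n n R} (h : IsCongruent G G') (h' : IsCongruent G' G'') :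
    IsCongruent G G'' := by
  obtain ⟨M, hM, rfl⟩ := h
  obtain ⟨N, hN, rfl⟩ := h'
  refine ⟨M * N, by rw [det_mul]; exact hM.mul hN, ?_⟩
  simp only [transpose_mul, Matrix.mul_assoc]

theorem exists_apply_self_eq [Nontrivial R] {G G' : Matrix n n R} (h : IsCongruent G G')
    (i : n) : ∃ v ≠ 0, G' i i = v ⬝ᵥ G *ᵥ v := by
  obtain ⟨M, hM, rfl⟩ := h
  refine ⟨Mᵀ i, fun h0 => hM.ne_zero ?_, transpose_mul_mul_apply M G i i⟩
  exact det_eq_zero_of_column_eq_zero i (congrFun h0)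

theorem det_eq {G G' : Matrix n n ℤ} (h : IsCongruent G G') : G'.det = G.det := by
  obtain ⟨M, hM, rfl⟩ := h
  rw [det_mul, det_mul, det_transpose, mul_comm, ← mul_assoc, ← sq, Int.isUnit_sq hM, one_mul]

end IsCongruent

section FinTwo

variable (a b c : R)

theorem isCongruent_shear (m : R) :
    IsCongruent !![a, b; b, c] !![a, b + a * m; b + a * m, a * m ^ 2 + 2 * b * m + c] := by
  refine ⟨!![1, m; 0, 1], by simp [det_fin_two_of], ?_⟩
  ext i j; fin_cases i <;> fin_cases j <;> simp [mul_apply, Fin.sum_univ_two] <;> ring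

theorem isCongruent_neg : IsCongruent !![a, b; b, c] !![a, -b; -b, c] := by
  refine ⟨!![1, 0; 0, -1], by simp [det_fin_two_of], ?_⟩
  ext i j; fin_cases i <;> fin_cases j <;> simp [mul_apply, Fin.sum_univ_two]

theorem isCongruent_swap : IsCongruent !![a, b; b, c] !![c, b; b, a] := by
  refine ⟨!![0, 1; 1, 0], by simp [det_fin_two_of], ?_⟩
  ext i j; fin_cases i <;> fin_cases j <;> simp [mul_apply, Fin.sum_univ_two]

end FinTwo

end Matrix

theorem dotProduct_mulVec_fin_two (a b c : ℤ) (v : Fin 2 → ℤ) :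
    v ⬝ᵥ !![a, b; b, c] *ᵥ v = a * v 0 ^ 2 + 2 * b * v 0 * v 1 + c * v 1 ^ 2 := by
  simp only [dotProduct, mulVec, Fin.sum_univ_two, of_apply, cons_val', cons_val_zero, cons_val_one,
    empty_val', cons_val_fin_one]
  ring

theorem Matrix.IsSymm.even_dotProduct_mulVec {G : Matrix (Fin 2) (Fin 2) ℤ} (hG : G.IsSymm)
    (h₀ : Even (G 0 0)) (h₁ : Even (G 1 1)) (v : Fin 2 → ℤ) : Even (v ⬝ᵥ G *ᵥ v) := by
  rw [hG.eq_fin_two, dotProduct_mulVec_fin_two]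
  obtain ⟨x, hx⟩ := h₀
  obtain ⟨y, hy⟩ := h₁
  exact ⟨x * v 0 ^ 2 + G 0 1 * v 0 * v 1 + y * v 1 ^ 2, by rw [hx, hy]; ring⟩

theorem one_le_sq_sub_mul_add_sq {x y : ℤ} (h : x ≠ 0 ∨ y ≠ 0) :
    1 ≤ x ^ 2 - x * y + y ^ 2 := by
  have : 0 < (2 * x - y) ^ 2 + 3 * y ^ 2 := by
    rcases eq_or_ne y 0 with rfl | hy
    · have hx : x ≠ 0 := by simpa using h
      nlinarith [sq_pos_of_ne_zero hx]
    · nlinarith [sq_nonneg (2 * x - y), sq_pos_of_ne_zero hy]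
  nlinarith

structure IsReducedForm (a b c : ℤ) : Prop where
  pos : 0 < a
  le : a ≤ c
  nonneg : 0 ≤ b
  two_mul_le : 2 * b ≤ a

namespace IsReducedForm

variable {a b c : ℤ}

theorem add_mul_sq_le_dotProduct_mulVec (h : IsReducedForm a b c) {v : Fin 2 → ℤ}
    (hv : v ≠ 0) :
    a + (c - a) * v 1 ^ 2 ≤ v ⬝ᵥ !![a, b; b, c] *ᵥ v := by
  obtain ⟨ha, hac, hb, hba⟩ := h
  have hv' : |v 0| ≠ 0 ∨ |v 1| ≠ 0 := by
    by_contra! h0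
    exact hv (funext fun i => by fin_cases i <;> simp_all)
  have hform : 1 ≤ |v 0| ^ 2 - |v 0| * |v 1| + |v 1| ^ 2 := one_le_sq_sub_mul_add_sq hv'
  have hcross : -(a * (|v 0| * |v 1|)) ≤ 2 * b * v 0 * v 1 := by
    have := neg_abs_le (v 0 * v 1)
    rw [abs_mul] at this
    nlinarith [mul_nonneg (abs_nonneg (v 0)) (abs_nonneg (v 1))]
  rw [dotProduct_mulVec_fin_two]
  nlinarith [sq_abs (v 0), sq_abs (v 1)]

theorem le_dotProduct_mulVec (h : IsReducedForm a b c) {v : Fin 2 → ℤ} (hv : v ≠ 0) :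
    a ≤ v ⬝ᵥ !![a, b; b, c] *ᵥ v := by
  have := h.add_mul_sq_le_dotProduct_mulVec hv
  nlinarith [h.le, sq_nonneg (v 1)]

theorem le_dotProduct_mulVec_of_apply_one_ne_zero (h : IsReducedForm a b c) {v : Fin 2 → ℤ}
    (hv : v 1 ≠ 0) :
    c ≤ v ⬝ᵥ !![a, b; b, c] *ᵥ v := by
  have := h.add_mul_sq_le_dotProduct_mulVec (v := v) fun h0 => hv (congrFun h0 1)
  nlinarith [h.le, sq_pos_of_ne_zero hv]

theorem le_of_isCongruent {a' b' c' : ℤ} (h : IsReducedForm a b c) (hac' : a' ≤ c')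
    (hcong : IsCongruent !![a, b; b, c] !![a', b'; b', c']) : a ≤ a' ∧ c ≤ c' := by
  obtain ⟨M, hM, hMG⟩ := hcong
  have hval (i : Fin 2) : !![a', b'; b', c'] i i = Mᵀ i ⬝ᵥ !![a, b; b, c] *ᵥ Mᵀ i := by
    rw [← hMG, transpose_mul_mul_apply]
  have ha'val : a' = Mᵀ 0 ⬝ᵥ !![a, b; b, c] *ᵥ Mᵀ 0 := hval 0
  have hc'val : c' = Mᵀ 1 ⬝ᵥ !![a, b; b, c] *ᵥ Mᵀ 1 := hval 1
  have hdet : M 0 0 * M 1 1 - M 0 1 * M 1 0 ≠ 0 := det_fin_two M ▸ hM.ne_zero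
  have ha' : a ≤ a' := by
    refine ha'val ▸ h.le_dotProduct_mulVec fun h0 => hdet ?_
    rw [show M 0 0 = 0 from congrFun h0 0, show M 1 0 = 0 from congrFun h0 1]
    ring
  refine ⟨ha', ?_⟩
  -- if the second column has `y = 0`, unimodularity forces `y ≠ 0` in the first: `c ≤ a' ≤ c'`
  by_cases hM11 : M 1 1 = 0
  · have hM10 : Mᵀ 0 1 ≠ 0 := by simp_all
    exact (ha'val ▸ h.le_dotProduct_mulVec_of_apply_one_ne_zero hM10).trans hac'
  · exact hc'val ▸ h.le_dotProduct_mulVec_of_apply_one_ne_zero hM11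

theorem eq_of_isCongruent {a' b' c' : ℤ} (h : IsReducedForm a b c) (h' : IsReducedForm a' b' c')
    (hcong : IsCongruent !![a, b; b, c] !![a', b'; b', c']) : a = a' ∧ b = b' ∧ c = c' := by
  obtain ⟨ha, hc⟩ := h.le_of_isCongruent h'.le hcong
  obtain ⟨ha', hc'⟩ := h'.le_of_isCongruent h.le hcong.symm
  obtain rfl : a = a' := le_antisymm ha ha'
  obtain rfl : c = c' := le_antisymm hc hc'
  have hdet := hcong.det_eq
  simp only [det_fin_two_of] at hdet
  have : b ^ 2 = b' ^ 2 := by linarith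
  exact ⟨rfl, (sq_eq_sq₀ h.nonneg h'.nonneg).1 this, rfl⟩

end IsReducedForm

theorem exists_isCongruent_nonneg_two_mul_le {a : ℤ} (ha : 0 < a) (b c : ℤ) :
    ∃ b' c', 0 ≤ b' ∧ 2 * b' ≤ a ∧ IsCongruent !![a, b; b, c] !![a, b'; b', c'] := by
  have hr₀ := Int.emod_nonneg b ha.ne'
  have hra := Int.emod_lt_of_pos b ha
  have hdiv := Int.emod_def b a
  by_cases hr : 2 * (b % a) ≤ a
  · have h := isCongruent_shear a b c (-(b / a))
    rw [show b + a * -(b / a) = b % a by linarith] at h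
    exact ⟨_, _, hr₀, hr, h⟩
  · have h := (isCongruent_shear a b c (-(b / a) - 1)).trans (isCongruent_neg _ _ _)
    rw [show -(b + a * (-(b / a) - 1)) = a - b % a by linarith] at h
    exact ⟨_, _, by omega, by omega, h⟩

theorem exists_isReducedForm_isCongruent {G : Matrix (Fin 2) (Fin 2) ℤ} (hG : G.IsSymm)
    (hpos : ∀ v ≠ 0, 0 < v ⬝ᵥ G *ᵥ v) :
    ∃ a b c, IsReducedForm a b c ∧ IsCongruent G !![a, b; b, c] := by
  have hpos_of_isCongruent {a b c : ℤ} (h : IsCongruent G !![a, b; b, c]) : 0 < a := by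
    obtain ⟨v, hv, hva⟩ := h.exists_apply_self_eq 0
    have hva : a = v ⬝ᵥ G *ᵥ v := hva
    exact hva ▸ hpos v hv
  obtain ⟨a, ⟨b, c, hGa⟩, hmin⟩ :=
    Int.exists_least_of_bdd (P := fun a => ∃ b c, IsCongruent G !![a, b; b, c])
      ⟨0, fun _ ⟨_, _, h⟩ => (hpos_of_isCongruent h).le⟩
      ⟨G 0 0, G 0 1, G 1 1, hG.eq_fin_two ▸ IsCongruent.refl G⟩
  have ha := hpos_of_isCongruent hGa
  obtain ⟨b', c', hb', hba', hbc⟩ := exists_isCongruent_nonneg_two_mul_le ha b c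
  have hac' : a ≤ c' := hmin c' ⟨b', a, (hGa.trans hbc).trans (isCongruent_swap _ _ _)⟩
  exact ⟨a, b', c', ⟨ha, hac', hb', hba'⟩, hGa.trans hbc⟩

/-- Every positive definite even ℤ-lattice of rank 2 has a unique reduced Gram
matrix `[[a,b],[b,c]]` with `0 < a ≤ c`, `0 ≤ 2b ≤ a`, `a` and `c` even. -/
theorem rank_two_even_lattice_reduced_form
    (G : Matrix (Fin 2) (Fin 2) ℤ) (hsymm : G.IsSymm)
    (hpos : ∀ v : Fin 2 → ℤ, v ≠ 0 → 0 < dotProduct v (G.mulVec v))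
    (heven₀ : Even (G 0 0)) (heven₁ : Even (G 1 1)) :
    ∃! t : ℤ × ℤ × ℤ,
      0 < t.1 ∧ t.1 ≤ t.2.2 ∧ 0 ≤ t.2.1 ∧ 2 * t.2.1 ≤ t.1 ∧
      Even t.1 ∧ Even t.2.2 ∧
      ∃ M : Matrix (Fin 2) (Fin 2) ℤ, (M.det = 1 ∨ M.det = -1) ∧
        M.transpose * G * M = !![t.1, t.2.1; t.2.1, t.2.2] := by
  obtain ⟨a, b, c, hred, hcong⟩ := exists_isReducedForm_isCongruent hsymm hpos
  have heven (i : Fin 2) : Even (!![a, b; b, c] i i) := by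
    obtain ⟨v, -, hv⟩ := hcong.exists_apply_self_eq i
    exact hv ▸ hsymm.even_dotProduct_mulVec heven₀ heven₁ v
  have ⟨M, hM, hMG⟩ := hcong
  refine ⟨(a, b, c), ⟨hred.pos, hred.le, hred.nonneg, hred.two_mul_le, heven 0, heven 1,
    M, Int.isUnit_iff.1 hM, hMG⟩, ?_⟩
  rintro ⟨a', b', c'⟩ ⟨ha', hac', hb', hba', -, -, M', hM', hM'G⟩
  obtain ⟨rfl, rfl, rfl⟩ := hred.eq_of_isCongruent ⟨ha', hac', hb', hba'⟩
    (hcong.symm.trans ⟨M', Int.isUnit_iff.2 hM', hM'G⟩)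
  rfl
end

section
/- Let a, b, c be integers with 0 < a ≤ c, 0 ≤ 2b ≤ a, a even and c even, and let G = [[a, b], [b, c]]. Then there exists an integer matrix M with det M = −1 and Mᵀ G M = G (an orientation-reversing autoisometry of the lattice with Gram matrix G) if and only if a = c, or a = 2b, or b = 0. -/
/-!
For a reduced form every vector with nonzero second coordinate has norm at least `c`. So when
`a < c`, an isometry `M` sends `e₁` to `p e₁` with `p = ±1`, and `det M = -1` forces
`M e₂ = q e₁ - p e₂`. Comparing `⟪M e₁, M e₂⟫ = b` then gives `a ∣ 2b`, impossible for
`0 < 2b < a`. Conversely the swap of the basis vectors, the reflection `e₂ ↦ e₁ - e₂` and the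
reflection `e₂ ↦ -e₂` are orientation-reversing isometries when `a = c`, `a = 2b` and `b = 0`
respectively.
-/

open Matrix

theorem transpose_mul_fin_two_mul {R : Type*} [CommRing R] (a b c p q r s : R) :
    !![p, q; r, s]ᵀ * !![a, b; b, c] * !![p, q; r, s] =
      !![a * p ^ 2 + 2 * b * p * r + c * r ^ 2, a * p * q + b * (p * s + q * r) + c * r * s;
        a * p * q + b * (p * s + q * r) + c * r * s, a * q ^ 2 + 2 * b * q * s + c * s ^ 2] := by
  ext i j
  fin_cases i <;> fin_cases j <;> simp [mul_apply, Fin.sum_univ_two] <;> ring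

theorem le_reduced_form_of_ne_zero {a b c x y : ℤ} (hb : 0 ≤ b) (hba : 2 * b ≤ a) (hac : a ≤ c)
    (hy : y ≠ 0) : c ≤ a * x ^ 2 + 2 * b * x * y + c * y ^ 2 := by
  have hy2 : 1 ≤ y ^ 2 := (one_le_sq_iff_one_le_abs _).2 (Int.one_le_abs hy)
  rcases eq_or_ne x 0 with rfl | hx
  · nlinarith
  · have hx2 : 1 ≤ x ^ 2 := (one_le_sq_iff_one_le_abs _).2 (Int.one_le_abs hx)
    nlinarith [mul_nonneg hb (sq_nonneg (x + y))]

theorem eq_zero_of_det_eq_neg_one_of_transpose_mul_mul_eq {a b c : ℤ} (hb : 0 ≤ b)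
    (hba : 2 * b < a) (hac : a < c) {M : Matrix (Fin 2) (Fin 2) ℤ} (hdet : M.det = -1)
    (hM : Mᵀ * !![a, b; b, c] * M = !![a, b; b, c]) : b = 0 := by
  rw [eta_fin_two M, transpose_mul_fin_two_mul] at hM
  rw [det_fin_two] at hdet
  have hQ := congrFun₂ hM 0 0
  have hB := congrFun₂ hM 0 1
  simp only [of_apply, cons_val', cons_val_zero, cons_val_one, empty_val', cons_val_fin_one] at hQ hB
  have hr : M 1 0 = 0 := by
    by_contra hr
    have := le_reduced_form_of_ne_zero (x := M 0 0) hb hba.le hac.le hr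
    omega
  rw [hr] at hB hdet
  have hdvd : a ∣ 2 * b := ⟨M 0 0 * M 0 1, by linear_combination -hB + b * hdet⟩
  have := Int.eq_zero_of_dvd_of_nonneg_of_lt (by omega) hba hdvd
  omega

theorem rank_two_even_lattice_orientation_reversing_general
    (a b c : ℤ) (hac : a ≤ c) (hb : 0 ≤ b) (hba : 2 * b ≤ a) :
    (∃ M : Matrix (Fin 2) (Fin 2) ℤ, M.det = -1 ∧
        M.transpose * !![a, b; b, c] * M = !![a, b; b, c]) ↔
      (a = c ∨ a = 2 * b ∨ b = 0) := by
  constructor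
  · rintro ⟨M, hdet, hM⟩
    rcases hac.eq_or_lt with hac | hac
    · exact Or.inl hac
    rcases hba.eq_or_lt with hba | hba
    · exact Or.inr (Or.inl hba.symm)
    exact Or.inr (Or.inr (eq_zero_of_det_eq_neg_one_of_transpose_mul_mul_eq hb hba hac hdet hM))
  · rintro (rfl | rfl | rfl)
    · refine ⟨!![0, 1; 1, 0], by simp, ?_⟩
      rw [transpose_mul_fin_two_mul]
      ext i j
      fin_cases i <;> fin_cases j <;> simp
    · refine ⟨!![1, 1; 0, -1], by simp, ?_⟩
      rw [transpose_mul_fin_two_mul]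
      ext i j
      fin_cases i <;> fin_cases j <;> simp <;> ring
    · refine ⟨!![1, 0; 0, -1], by simp, ?_⟩
      rw [transpose_mul_fin_two_mul]
      ext i j
      fin_cases i <;> fin_cases j <;> simp

/-- A reduced positive definite even rank-2 Gram matrix `[[a,b],[b,c]]`
admits an orientation-reversing autoisometry if and only if `a = c`, or `a = 2b`, or `b = 0`. -/
theorem rank_two_even_lattice_orientation_reversing
    (a b c : ℤ) (ha : 0 < a) (hac : a ≤ c) (hb : 0 ≤ b) (hba : 2 * b ≤ a)
    (hea : Even a) (hec : Even c) :
    (∃ M : Matrix (Fin 2) (Fin 2) ℤ, M.det = -1 ∧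
        M.transpose * !![a, b; b, c] * M = !![a, b; b, c]) ↔
      (a = c ∨ a = 2 * b ∨ b = 0) :=
  rank_two_even_lattice_orientation_reversing_general a b c hac hb hba
end

section
/- The Schur quartic surface in ℙ³(ℂ) defined by x₀(x₀³ − x₁³) − x₂(x₂³ − x₃³) = 0 is smooth and contains exactly 64 lines. -/
open MvPolynomial

/-- The set of lines (2-dimensional linear subspaces of ℂ⁴) contained in the quartic `{F = 0}`. -/
def linesOn (F : MvPolynomial (Fin 4) ℂ) : Set (Submodule ℂ (Fin 4 → ℂ)) :=
  {W | Module.finrank ℂ ↥W = 2 ∧ ∀ v ∈ W, eval v F = 0}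

/-- The quartic surface `{F = 0}` is smooth: `F` and its partial derivatives have no common
zero in ℂ⁴ ∖ {0}. -/
def IsSmoothQuartic (F : MvPolynomial (Fin 4) ℂ) : Prop :=
  ∀ v : Fin 4 → ℂ, v ≠ 0 → ¬ (eval v F = 0 ∧ ∀ i : Fin 4, eval v (pderiv i F) = 0)

/-- The defining polynomial of the Schur quartic `X₆₄`. -/
noncomputable def FSchur : MvPolynomial (Fin 4) ℂ :=
  X 0 * (X 0 ^ 3 - X 1 ^ 3) - X 2 * (X 2 ^ 3 - X 3 ^ 3)

/-! Write `F = q(x₀, x₁) - q(x₂, x₃)` with the binary quartic `q(s, t) = s⁴ - s t³`, which has four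
distinct roots. The gradient of `F` vanishes only where both gradients of `q` do, i.e. at `0`.

A line either projects isomorphically onto the `(x₀, x₁)`-plane, and is then the graph of a linear
map `A` with `q ∘ A = q`; comparing coefficients leaves exactly 48 such `A` (12 diagonal ones and 36
others). Or it meets `{x₀ = x₁ = 0}`; it cannot be a graph over the `(x₂, x₃)`-plane as well, since
the automorphisms of `q` are invertible, so it also meets `{x₂ = x₃ = 0}`, and is spanned by a root
of `q` in each of the two planes: 4 × 4 = 16 more lines. -/

open Module Submodule

section LinearAlgebra

variable {K V : Type*} [Field K] [AddCommGroup V] [Module K V]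

theorem finrank_span_pair {u v : V} (huv : LinearIndependent K ![u, v]) :
    finrank K (span K {u, v}) = 2 := by
  have := finrank_span_eq_card huv
  rwa [Matrix.range_cons_cons_empty, Fintype.card_fin] at this

theorem Submodule.eq_span_pair_of_finrank_eq_two {W : Submodule K V} (hW : finrank K W = 2)
    {u v : V} (hu : u ∈ W) (hv : v ∈ W) (huv : LinearIndependent K ![u, v]) :
    W = span K {u, v} := by
  have : FiniteDimensional K W := .of_finrank_pos (by omega)
  refine (eq_of_le_of_finrank_eq ?_ (by rw [hW, finrank_span_pair huv])).symm
  rw [span_le]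
  rintro x (rfl | rfl) <;> assumption

theorem LinearIndependent.pair_of_dual {u v : V} (f g : V →ₗ[K] K) (hfu : f u = 1) (hgu : g u = 0)
    (hfv : f v = 0) (hgv : g v = 1) : LinearIndependent K ![u, v] := by
  refine LinearIndependent.pair_iff.2 fun s t hst => ⟨?_, ?_⟩
  · simpa [hfu, hfv] using congrArg f hst
  · simpa [hgu, hgv] using congrArg g hst

theorem Submodule.exists_dual_pair_or_exists_ne_zero {W : Submodule K V} (hW : finrank K W = 2)
    (f g : V →ₗ[K] K) :
    (∃ u v, f u = 1 ∧ g u = 0 ∧ f v = 0 ∧ g v = 1 ∧ W = span K {u, v}) ∨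
      ∃ w ∈ W, w ≠ 0 ∧ f w = 0 ∧ g w = 0 := by
  have : FiniteDimensional K W := .of_finrank_pos (by omega)
  let p : W →ₗ[K] K × K := (f.prod g).comp W.subtype
  by_cases hp : Function.Injective p
  · have hsurj : Function.Surjective p :=
      (LinearMap.injective_iff_surjective_of_finrank_eq_finrank (by simp [hW])).1 hp
    obtain ⟨u, hu⟩ := hsurj (1, 0)
    obtain ⟨v, hv⟩ := hsurj (0, 1)
    simp only [p, LinearMap.comp_apply, LinearMap.prod_apply, subtype_apply, Prod.ext_iff,
      Function.prod] at hu hv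
    refine Or.inl ⟨u, v, hu.1, hu.2, hv.1, hv.2, ?_⟩
    exact W.eq_span_pair_of_finrank_eq_two hW u.2 v.2 (.pair_of_dual f g hu.1 hu.2 hv.1 hv.2)
  · rw [injective_iff_map_eq_zero] at hp
    push Not at hp
    obtain ⟨w, hw, hw_ne⟩ := hp
    simp only [p, LinearMap.comp_apply, LinearMap.prod_apply, subtype_apply, Prod.ext_iff,
      Function.prod] at hw
    exact Or.inr ⟨w, w.2, by simpa using hw_ne, hw⟩

end LinearAlgebra

theorem coeffs_eq_zero_of_forall_quartic_eq_zero {K : Type*} [Field K] [CharZero K]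
    {c₀ c₁ c₂ c₃ c₄ : K} (h : ∀ s : K, c₄ * s ^ 4 + c₃ * s ^ 3 + c₂ * s ^ 2 + c₁ * s + c₀ = 0) :
    c₄ = 0 ∧ c₃ = 0 ∧ c₂ = 0 ∧ c₁ = 0 ∧ c₀ = 0 := by
  have h₀ := h 0; have h₁ := h 1; have h₁' := h (-1); have h₂ := h 2; have h₂' := h (-2)
  refine ⟨?_, ?_, ?_, ?_, ?_⟩
  · linear_combination (h₂ + h₂' - 4 * h₁ - 4 * h₁' + 6 * h₀) / 24
  · linear_combination (h₂ - h₂' - 2 * h₁ + 2 * h₁') / 12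
  · linear_combination (-h₂ - h₂' + 16 * h₁ + 16 * h₁' - 30 * h₀) / 24
  · linear_combination (-h₂ + h₂' + 8 * h₁ - 8 * h₁') / 12
  · linear_combination h₀

theorem ne_zero_of_pow_eq_one {M₀ : Type*} [MonoidWithZero M₀] [Nontrivial M₀] {z : M₀} {n : ℕ}
    (hn : n ≠ 0) (h : z ^ n = 1) : z ≠ 0 :=
  ne_zero_pow hn (h ▸ one_ne_zero)

theorem Complex.card_pow_eq_one (n : ℕ) [NeZero n] : Nat.card {z : ℂ // z ^ n = 1} = n :=
  calc Nat.card {z : ℂ // z ^ n = 1} = Nat.card (Polynomial.nthRootsFinset n (1 : ℂ)) :=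
        Nat.card_congr <| Equiv.subtypeEquivRight fun _ =>
          (Polynomial.mem_nthRootsFinset (NeZero.pos n) 1).symm
    _ = n := by
      rw [Nat.card_eq_finsetCard, (Complex.isPrimitiveRoot_exp n (NeZero.ne n)).card_nthRootsFinset]

instance Complex.finite_pow_eq_one (n : ℕ) [NeZero n] : Finite {z : ℂ // z ^ n = 1} :=
  Nat.finite_of_card_ne_zero (by rw [Complex.card_pow_eq_one]; exact NeZero.ne n)

theorem Complex.sqrt_three_sq : ((√3 : ℝ) : ℂ) ^ 2 = 3 := by
  rw [← Complex.ofReal_pow, Real.sq_sqrt (by norm_num)]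
  norm_num

theorem Complex.sqrt_three_ne_zero : ((√3 : ℝ) : ℂ) ≠ 0 := by
  intro h
  simpa [h] using Complex.sqrt_three_sq

theorem Complex.sqrt_three_pow_four : ((√3 : ℝ) : ℂ) ^ 4 = 9 := by
  linear_combination (((√3 : ℝ) : ℂ) ^ 2 + 3) * Complex.sqrt_three_sq

def schurForm (s t : ℂ) : ℂ := s ^ 4 - s * t ^ 3

theorem eval_FSchur (v : Fin 4 → ℂ) :
    eval v FSchur = schurForm (v 0) (v 1) - schurForm (v 2) (v 3) := by
  simp [FSchur, schurForm]
  ring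

theorem eq_zero_of_gradient_schurForm_eq_zero {s t : ℂ} (hs : 4 * s ^ 3 - t ^ 3 = 0)
    (ht : 3 * s * t ^ 2 = 0) : s = 0 ∧ t = 0 := by
  rcases mul_eq_zero.1 ht with hs' | ht'
  · have hs0 : s = 0 := by simpa using hs'
    subst hs0
    exact ⟨rfl, by simpa using hs⟩
  · have ht0 : t = 0 := by simpa using ht'
    subst ht0
    exact ⟨by simpa using hs, rfl⟩

theorem isSmoothQuartic_FSchur : IsSmoothQuartic FSchur := by
  rintro v hv ⟨-, hd⟩
  have h₀ := hd 0; have h₁ := hd 1; have h₂ := hd 2; have h₃ := hd 3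
  simp [FSchur, pderiv_X] at h₀ h₁ h₂ h₃
  obtain ⟨hv₀, hv₁⟩ := eq_zero_of_gradient_schurForm_eq_zero (s := v 0) (t := v 1)
    (by linear_combination h₀) (by simpa using h₁)
  obtain ⟨hv₂, hv₃⟩ := eq_zero_of_gradient_schurForm_eq_zero (s := v 2) (t := v 3)
    (by linear_combination -h₂) (by simpa using h₃)
  exact hv (funext fun i => by fin_cases i <;> assumption)

def PreservesSchurForm (a b c d : ℂ) : Prop :=
  ∀ s t : ℂ, schurForm (a * s + b * t) (c * s + d * t) = schurForm s t

namespace PreservesSchurForm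

variable {a b c d : ℂ}

theorem coeffs_eq_zero (h : PreservesSchurForm a b c d) :
    a ^ 4 - a * c ^ 3 - 1 = 0 ∧ 4 * a ^ 3 * b - b * c ^ 3 - 3 * a * c ^ 2 * d = 0 ∧
      6 * a ^ 2 * b ^ 2 - 3 * b * c ^ 2 * d - 3 * a * c * d ^ 2 = 0 ∧
      4 * a * b ^ 3 - a * d ^ 3 - 3 * b * c * d ^ 2 + 1 = 0 ∧ b ^ 4 - b * d ^ 3 = 0 :=
  coeffs_eq_zero_of_forall_quartic_eq_zero fun s => by
    have := h s 1
    simp only [schurForm] at this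
    linear_combination this

theorem diag (h : PreservesSchurForm a 0 c d) :
    a ^ 4 = 1 ∧ c = 0 ∧ ∃ ζ : ℂ, ζ ^ 3 = 1 ∧ d = a * ζ := by
  obtain ⟨e₄, e₃, -, e₁, -⟩ := h.coeffs_eq_zero
  have had : a * d ^ 3 = 1 := by linear_combination -e₁
  have ha : a ≠ 0 := left_ne_zero_of_mul_eq_one had
  have hd : d ≠ 0 := ne_zero_pow three_ne_zero (right_ne_zero_of_mul_eq_one had)
  have hc : c = 0 := by
    have : a * d * c ^ 2 = 0 := by linear_combination -e₃ / 3
    simpa [ha, hd] using this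
  subst hc
  have ha₄ : a ^ 4 = 1 := by linear_combination e₄
  refine ⟨ha₄, rfl, d / a, ?_, by field_simp⟩
  have : d ^ 3 = a ^ 3 := mul_left_cancel₀ ha (by linear_combination had - ha₄)
  rw [div_pow, this, div_self (pow_ne_zero 3 ha)]

theorem skew (h : PreservesSchurForm a b c d) (hb : b ≠ 0) :
    ∃ α η θ : ℂ, α ^ 4 = 1 ∧ η ^ 3 = 1 ∧ θ ^ 3 = 1 ∧ a = α / √3 ∧ b = -α * η * θ / √3 ∧
      c = -2 * η ^ 2 * α / √3 ∧ d = -α * θ / √3 := by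
  obtain ⟨e₄, -, e₂, e₁, e₀⟩ := h.coeffs_eq_zero
  have hbd : b ^ 3 = d ^ 3 := by
    have : b * (b ^ 3 - d ^ 3) = 0 := by linear_combination e₀
    linear_combination (mul_eq_zero.1 this).resolve_left hb
  have hd : d ≠ 0 := by
    rintro rfl
    exact hb (pow_eq_zero_iff three_ne_zero |>.1 (by simpa using hbd))
  obtain ⟨η, rfl, hη⟩ : ∃ η, b = η * d ∧ η ^ 3 = 1 :=
    ⟨b / d, by field_simp, by rw [div_pow, hbd, div_self (pow_ne_zero 3 hd)]⟩
  have hc : c = -2 * η ^ 2 * a := by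
    have : 3 * d ^ 2 * ((a - η * c) * (2 * η ^ 2 * a + c)) = 0 := by
      linear_combination e₂ - 6 * a * c * d ^ 2 * hη
    rcases mul_eq_zero.1 ((mul_eq_zero.1 this).resolve_left (by simp [hd])) with hac | hc
    · have : 3 * d ^ 3 * (a - η * c) + 1 = 0 := by linear_combination e₁ - 4 * a * d ^ 3 * hη
      simp [hac] at this
    · linear_combination hc
  subst hc
  have h₉ : 9 * a ^ 4 = 1 := by linear_combination e₄ - 8 * a ^ 4 * (η ^ 3 + 1) * hη
  have ha : a ≠ 0 := by rintro rfl; simp at h₉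
  have hd₃ : d ^ 3 = -a ^ 3 := mul_left_cancel₀ (show 9 * a ≠ 0 by simp [ha]) <| by
    linear_combination e₁ - 10 * a * d ^ 3 * hη + h₉
  obtain ⟨θ, rfl, hθ⟩ : ∃ θ, d = -a * θ ∧ θ ^ 3 = 1 :=
    ⟨-d / a, by field_simp, by rw [div_pow, neg_pow, hd₃]; field_simp⟩
  have h3 := Complex.sqrt_three_ne_zero
  refine ⟨√3 * a, η, θ, ?_, hη, hθ, by field_simp, by field_simp, by field_simp, by field_simp⟩
  linear_combination a ^ 4 * Complex.sqrt_three_pow_four + h₉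

theorem det_ne_zero (h : PreservesSchurForm a b c d) : a * d - b * c ≠ 0 := by
  rcases eq_or_ne b 0 with rfl | hb
  · obtain ⟨ha, rfl, ζ, hζ, rfl⟩ := h.diag
    simp [ne_zero_of_pow_eq_one four_ne_zero ha, ne_zero_of_pow_eq_one three_ne_zero hζ]
  · obtain ⟨α, η, θ, hα, hη, hθ, rfl, rfl, rfl, rfl⟩ := h.skew hb
    have h3 := Complex.sqrt_three_ne_zero
    have : α / √3 * (-α * θ / √3) - -α * η * θ / √3 * (-2 * η ^ 2 * α / √3) = -α ^ 2 * θ := by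
      field_simp
      linear_combination α ^ 2 * θ * Complex.sqrt_three_sq - 2 * α ^ 2 * θ * hη
    rw [this]
    simp [ne_zero_of_pow_eq_one four_ne_zero hα, ne_zero_of_pow_eq_one three_ne_zero hθ]

end PreservesSchurForm

theorem preservesSchurForm_diag {α ζ : ℂ} (hα : α ^ 4 = 1) (hζ : ζ ^ 3 = 1) :
    PreservesSchurForm α 0 0 (α * ζ) := by
  intro s t
  simp only [schurForm]
  linear_combination (s ^ 4 - s * t ^ 3 * ζ ^ 3) * hα - s * t ^ 3 * hζ

theorem preservesSchurForm_skew {α η θ : ℂ} (hα : α ^ 4 = 1) (hη : η ^ 3 = 1) (hθ : θ ^ 3 = 1) :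
    PreservesSchurForm (α / √3) (-α * η * θ / √3) (-2 * η ^ 2 * α / √3) (-α * θ / √3) := by
  intro s t
  have h3 := Complex.sqrt_three_ne_zero
  have key : schurForm (s - η * θ * t) (-2 * η ^ 2 * s - θ * t) = 9 * schurForm s t := by
    simp only [schurForm]
    linear_combination (8 * s ^ 4 - 10 * θ ^ 3 * s * t ^ 3 + 4 * η * θ * s ^ 3 * t +
      η * θ ^ 4 * t ^ 4 - 12 * η ^ 2 * θ ^ 2 * s ^ 2 * t ^ 2 + 8 * η ^ 3 * s ^ 4 -
      8 * η ^ 4 * θ * s ^ 3 * t) * hη - 9 * s * t ^ 3 * hθ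
  calc schurForm (α / √3 * s + -α * η * θ / √3 * t) (-2 * η ^ 2 * α / √3 * s + -α * θ / √3 * t)
      = α ^ 4 / (√3 : ℂ) ^ 4 * schurForm (s - η * θ * t) (-2 * η ^ 2 * s - θ * t) := by
        simp only [schurForm]
        field_simp
        ring
    _ = schurForm s t := by
        rw [key, hα, Complex.sqrt_three_pow_four]
        ring

noncomputable def graphLine (a b c d : ℂ) : Submodule ℂ (Fin 4 → ℂ) :=
  span ℂ {![1, 0, a, c], ![0, 1, b, d]}

noncomputable def productLine (x y : ℂ × ℂ) : Submodule ℂ (Fin 4 → ℂ) :=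
  span ℂ {![x.1, x.2, 0, 0], ![0, 0, y.1, y.2]}

theorem eval_smul_add_smul_eq_zero {F : MvPolynomial (Fin 4) ℂ} {u v : Fin 4 → ℂ}
    (h : span ℂ {u, v} ∈ linesOn F) (s t : ℂ) : eval (s • u + t • v) F = 0 :=
  h.2 _ (mem_span_pair.2 ⟨s, t, rfl⟩)

theorem span_pair_mem_linesOn_iff {F : MvPolynomial (Fin 4) ℂ} {u v : Fin 4 → ℂ}
    (huv : LinearIndependent ℂ ![u, v]) :
    span ℂ {u, v} ∈ linesOn F ↔ ∀ s t : ℂ, eval (s • u + t • v) F = 0 := by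
  refine ⟨eval_smul_add_smul_eq_zero, fun h => ⟨finrank_span_pair huv, fun x hx => ?_⟩⟩
  obtain ⟨s, t, rfl⟩ := mem_span_pair.1 hx
  exact h s t

theorem mem_graphLine {a b c d : ℂ} {x : Fin 4 → ℂ} :
    x ∈ graphLine a b c d ↔ x 2 = a * x 0 + b * x 1 ∧ x 3 = c * x 0 + d * x 1 := by
  rw [graphLine, mem_span_pair]
  constructor
  · rintro ⟨s, t, rfl⟩
    exact ⟨by simp; ring, by simp; ring⟩
  · rintro ⟨h₂, h₃⟩
    refine ⟨x 0, x 1, funext fun i => ?_⟩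
    fin_cases i <;> simp [h₂, h₃] <;> ring

theorem linearIndependent_graphLine (a b c d : ℂ) :
    LinearIndependent ℂ ![![1, 0, a, c], ![0, 1, b, d]] :=
  .pair_of_dual (LinearMap.proj 0) (LinearMap.proj 1) rfl rfl rfl rfl

theorem graphLine_mem_linesOn_iff {a b c d : ℂ} :
    graphLine a b c d ∈ linesOn FSchur ↔ PreservesSchurForm a b c d := by
  rw [graphLine, span_pair_mem_linesOn_iff (linearIndependent_graphLine a b c d)]
  refine forall₂_congr fun s t => ?_
  simp [eval_FSchur, sub_eq_zero, eq_comm, mul_comm]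

theorem graphLine_injective {a b c d a' b' c' d' : ℂ}
    (h : graphLine a b c d = graphLine a' b' c' d') : a = a' ∧ b = b' ∧ c = c' ∧ d = d' := by
  have hu : ![1, 0, a, c] ∈ graphLine a' b' c' d' := h ▸ subset_span (by simp)
  have hv : ![0, 1, b, d] ∈ graphLine a' b' c' d' := h ▸ subset_span (by simp)
  obtain ⟨ha, hc⟩ : a = a' ∧ c = c' := by simpa [mem_graphLine] using hu
  obtain ⟨hb, hd⟩ : b = b' ∧ d = d' := by simpa [mem_graphLine] using hv
  exact ⟨ha, hb, hc, hd⟩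

theorem linearIndependent_productLine {x y : ℂ × ℂ} (hx : x ≠ 0) (hy : y ≠ 0) :
    LinearIndependent ℂ ![![x.1, x.2, 0, 0], ![0, 0, y.1, y.2]] := by
  refine LinearIndependent.pair_iff.2 fun s t hst => ⟨?_, ?_⟩
  · have : s • x = 0 := Prod.ext (by simpa using congrFun hst 0) (by simpa using congrFun hst 1)
    exact (smul_eq_zero.1 this).resolve_right hx
  · have : t • y = 0 := Prod.ext (by simpa using congrFun hst 2) (by simpa using congrFun hst 3)
    exact (smul_eq_zero.1 this).resolve_right hy

theorem productLine_mem_linesOn {x y : ℂ × ℂ} (hx : x ≠ 0) (hy : y ≠ 0)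
    (hqx : schurForm x.1 x.2 = 0) (hqy : schurForm y.1 y.2 = 0) :
    productLine x y ∈ linesOn FSchur := by
  rw [productLine, span_pair_mem_linesOn_iff (linearIndependent_productLine hx hy)]
  intro s t
  simp [eval_FSchur, schurForm] at hqx hqy ⊢
  linear_combination s ^ 4 * hqx - t ^ 4 * hqy

theorem productLine_ne_graphLine {x y : ℂ × ℂ} (hy : y ≠ 0) (a b c d : ℂ) :
    productLine x y ≠ graphLine a b c d := by
  intro h
  have hy' : ![0, 0, y.1, y.2] ∈ graphLine a b c d := h ▸ subset_span (by simp)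
  exact hy (Prod.ext_iff.2 (by simpa [mem_graphLine] using hy'))

local notation "μ₃" => {ζ : ℂ // ζ ^ 3 = 1}
local notation "μ₄" => {α : ℂ // α ^ 4 = 1}

def schurRoot : Option μ₃ → ℂ × ℂ
  | none => (0, 1)
  | some ζ => (1, ζ)

theorem schurRoot_ne_zero (p : Option μ₃) : schurRoot p ≠ 0 := by
  cases p <;> simp [schurRoot]

theorem schurForm_schurRoot (p : Option μ₃) : schurForm (schurRoot p).1 (schurRoot p).2 = 0 := by
  rcases p with _ | ⟨ζ, hζ⟩
  · simp [schurRoot, schurForm]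
  · simp [schurRoot, schurForm, hζ]

theorem exists_eq_smul_schurRoot {x : ℂ × ℂ} (hx : x ≠ 0) (hq : schurForm x.1 x.2 = 0) :
    ∃ p, ∃ c : ℂ, c ≠ 0 ∧ x = c • schurRoot p := by
  obtain ⟨s, t⟩ := x
  rcases eq_or_ne s 0 with rfl | hs
  · have ht : t ≠ 0 := by rintro rfl; exact hx rfl
    exact ⟨none, t, ht, by simp [schurRoot]⟩
  · have hζ : (t / s) ^ 3 = 1 := by
      have : s * (s ^ 3 - t ^ 3) = 0 := by simp only [schurForm] at hq; linear_combination hq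
      rw [div_pow, div_eq_one_iff_eq (pow_ne_zero 3 hs)]
      linear_combination -(mul_eq_zero.1 this).resolve_left hs
    exact ⟨some ⟨t / s, hζ⟩, s, hs, by simp [schurRoot, mul_div_cancel₀ t hs]⟩

theorem eq_of_schurRoot_eq_smul {p p' : Option μ₃} {c : ℂ} (h : schurRoot p = c • schurRoot p') :
    p = p' := by
  rcases p with _ | ⟨ζ, hζ⟩ <;> rcases p' with _ | ⟨ζ', hζ'⟩ <;>
    simp only [schurRoot, Prod.smul_mk, smul_eq_mul, Prod.mk.injEq, mul_zero, mul_one] at h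
  · rfl
  · exact absurd h.2 (by simp [← h.1])
  · exact absurd h.1 one_ne_zero
  · simp [h.2, ← h.1]

theorem productLine_schurRoot_injective {p r p' r' : Option μ₃}
    (h : productLine (schurRoot p) (schurRoot r) = productLine (schurRoot p') (schurRoot r')) :
    p = p' ∧ r = r' := by
  have hx : ![(schurRoot p).1, (schurRoot p).2, 0, 0] ∈ productLine (schurRoot p') (schurRoot r') :=
    h ▸ subset_span (by simp)
  have hy : ![0, 0, (schurRoot r).1, (schurRoot r).2] ∈ productLine (schurRoot p') (schurRoot r') :=
    h ▸ subset_span (by simp)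
  obtain ⟨s, _, hs⟩ := mem_span_pair.1 hx
  obtain ⟨_, t, ht⟩ := mem_span_pair.1 hy
  have hp : schurRoot p = s • schurRoot p' :=
    Prod.ext (by simpa using (congrFun hs 0).symm) (by simpa using (congrFun hs 1).symm)
  have hr : schurRoot r = t • schurRoot r' :=
    Prod.ext (by simpa using (congrFun ht 2).symm) (by simpa using (congrFun ht 3).symm)
  exact ⟨eq_of_schurRoot_eq_smul hp, eq_of_schurRoot_eq_smul hr⟩

theorem eq_zero_of_mem_linesOn_of_graph_over_last_coords {u v w : Fin 4 → ℂ} (hu₂ : u 2 = 1)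
    (hu₃ : u 3 = 0) (hv₂ : v 2 = 0) (hv₃ : v 3 = 1) (hF : span ℂ {u, v} ∈ linesOn FSchur)
    (hw : w ∈ span ℂ {u, v}) (hw₀ : w 0 = 0) (hw₁ : w 1 = 0) : w = 0 := by
  have hA : PreservesSchurForm (u 0) (v 0) (u 1) (v 1) := fun s t => by
    have := eval_smul_add_smul_eq_zero hF s t
    simp [eval_FSchur, hu₂, hu₃, hv₂, hv₃, schurForm] at this ⊢
    linear_combination this
  obtain ⟨s, t, rfl⟩ := mem_span_pair.1 hw
  simp only [Pi.add_apply, Pi.smul_apply, smul_eq_mul] at hw₀ hw₁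
  have hs : s = 0 := (mul_eq_zero.1 (show (u 0 * v 1 - v 0 * u 1) * s = 0 by
    linear_combination v 1 * hw₀ - v 0 * hw₁)).resolve_left hA.det_ne_zero
  have ht : t = 0 := (mul_eq_zero.1 (show (u 0 * v 1 - v 0 * u 1) * t = 0 by
    linear_combination u 0 * hw₁ - u 1 * hw₀)).resolve_left hA.det_ne_zero
  simp [hs, ht]

theorem exists_eq_productLine {W : Submodule ℂ (Fin 4 → ℂ)} (hW : W ∈ linesOn FSchur)
    {w w' : Fin 4 → ℂ} (hw : w ∈ W) (hw' : w' ∈ W) (hw_ne : w ≠ 0) (hw'_ne : w' ≠ 0)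
    (hw₀ : w 0 = 0) (hw₁ : w 1 = 0) (hw'₂ : w' 2 = 0) (hw'₃ : w' 3 = 0) :
    ∃ p r, W = productLine (schurRoot p) (schurRoot r) := by
  have hx : (w' 0, w' 1) ≠ 0 := fun h => hw'_ne <| funext fun i => by
    fin_cases i <;> simp_all [Prod.ext_iff]
  have hy : (w 2, w 3) ≠ 0 := fun h => hw_ne <| funext fun i => by
    fin_cases i <;> simp_all [Prod.ext_iff]
  have hqx : schurForm (w' 0) (w' 1) = 0 := by
    simpa [eval_FSchur, hw'₂, hw'₃, schurForm] using hW.2 w' hw'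
  have hqy : schurForm (w 2) (w 3) = 0 := by
    have := hW.2 w hw
    simp only [eval_FSchur, hw₀, hw₁, schurForm] at this ⊢
    linear_combination -this
  obtain ⟨p, c, hc, hpc⟩ := exists_eq_smul_schurRoot hx hqx
  obtain ⟨r, c', hc', hrc⟩ := exists_eq_smul_schurRoot hy hqy
  refine ⟨p, r, W.eq_span_pair_of_finrank_eq_two hW.1 ?_ ?_
    (linearIndependent_productLine (schurRoot_ne_zero p) (schurRoot_ne_zero r))⟩
  · convert W.smul_mem c⁻¹ hw' using 1
    simp only [Prod.ext_iff, Prod.smul_fst, Prod.smul_snd, smul_eq_mul] at hpc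
    ext i; fin_cases i <;> simp [hpc, hw'₂, hw'₃, hc]
  · convert W.smul_mem c'⁻¹ hw using 1
    simp only [Prod.ext_iff, Prod.smul_fst, Prod.smul_snd, smul_eq_mul] at hrc
    ext i; fin_cases i <;> simp [hrc, hw₀, hw₁, hc']

theorem eq_graphLine_or_eq_productLine {W : Submodule ℂ (Fin 4 → ℂ)} (hW : W ∈ linesOn FSchur) :
    (∃ a b c d, PreservesSchurForm a b c d ∧ W = graphLine a b c d) ∨
      ∃ p r, W = productLine (schurRoot p) (schurRoot r) := by
  rcases W.exists_dual_pair_or_exists_ne_zero hW.1 (LinearMap.proj 0) (LinearMap.proj 1) with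
    ⟨u, v, hu₀, hu₁, hv₀, hv₁, rfl⟩ | ⟨w, hw, hw_ne, hw₀, hw₁⟩
  · have hu : ![1, 0, u 2, u 3] = u := funext fun i => by fin_cases i <;> simp_all
    have hv : ![0, 1, v 2, v 3] = v := funext fun i => by fin_cases i <;> simp_all
    have hG : span ℂ {u, v} = graphLine (u 2) (v 2) (u 3) (v 3) := by rw [graphLine, hu, hv]
    exact Or.inl ⟨_, _, _, _, graphLine_mem_linesOn_iff.1 (hG ▸ hW), hG⟩
  · rcases W.exists_dual_pair_or_exists_ne_zero hW.1 (LinearMap.proj 2) (LinearMap.proj 3) with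
      ⟨u, v, hu₂, hu₃, hv₂, hv₃, rfl⟩ | ⟨w', hw', hw'_ne, hw'₂, hw'₃⟩
    · exact absurd (eq_zero_of_mem_linesOn_of_graph_over_last_coords hu₂ hu₃ hv₂ hv₃ hW hw hw₀ hw₁)
        hw_ne
    · exact Or.inr (exists_eq_productLine hW hw hw' hw_ne hw'_ne hw₀ hw₁ hw'₂ hw'₃)

/-- The 16 lines joining roots of `schurForm` in the two coordinate planes, and the graphs of its
12 diagonal and 36 other automorphisms. -/
noncomputable def schurLine :
    (Option μ₃ × Option μ₃) ⊕ (μ₄ × μ₃) ⊕ (μ₄ × μ₃ × μ₃) → Submodule ℂ (Fin 4 → ℂ)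
  | .inl (p, r) => productLine (schurRoot p) (schurRoot r)
  | .inr (.inl (α, ζ)) => graphLine α 0 0 (α * ζ)
  | .inr (.inr (α, η, θ)) =>
      graphLine (α / √3) (-α * η * θ / √3) (-2 * η ^ 2 * α / √3) (-α * θ / √3)

theorem schurLine_mem_linesOn (i) : schurLine i ∈ linesOn FSchur := by
  rcases i with ⟨p, r⟩ | ⟨α, ζ⟩ | ⟨α, η, θ⟩
  · exact productLine_mem_linesOn (schurRoot_ne_zero p) (schurRoot_ne_zero r)
      (schurForm_schurRoot p) (schurForm_schurRoot r)
  · exact graphLine_mem_linesOn_iff.2 (preservesSchurForm_diag α.2 ζ.2)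
  · exact graphLine_mem_linesOn_iff.2 (preservesSchurForm_skew α.2 η.2 θ.2)

theorem linesOn_FSchur_subset_range_schurLine : linesOn FSchur ⊆ Set.range schurLine := by
  intro W hW
  rcases eq_graphLine_or_eq_productLine hW with ⟨a, b, c, d, hA, rfl⟩ | ⟨p, r, rfl⟩
  · rcases eq_or_ne b 0 with rfl | hb
    · obtain ⟨ha, rfl, ζ, hζ, rfl⟩ := hA.diag
      exact ⟨.inr (.inl (⟨a, ha⟩, ⟨ζ, hζ⟩)), rfl⟩
    · obtain ⟨α, η, θ, hα, hη, hθ, rfl, rfl, rfl, rfl⟩ := hA.skew hb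
      exact ⟨.inr (.inr (⟨α, hα⟩, ⟨η, hη⟩, ⟨θ, hθ⟩)), rfl⟩
  · exact ⟨.inl (p, r), rfl⟩

theorem linesOn_FSchur_eq_range_schurLine : linesOn FSchur = Set.range schurLine :=
  linesOn_FSchur_subset_range_schurLine.antisymm (Set.range_subset_iff.2 schurLine_mem_linesOn)

theorem schurLine_injective : Function.Injective schurLine := by
  have h3 := Complex.sqrt_three_ne_zero
  rintro (⟨p, r⟩ | ⟨α, ζ⟩ | ⟨α, η, θ⟩) (⟨p', r'⟩ | ⟨α', ζ'⟩ | ⟨α', η', θ'⟩) h <;>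
    simp only [schurLine] at h
  · obtain ⟨rfl, rfl⟩ := productLine_schurRoot_injective h
    rfl
  · exact absurd h (productLine_ne_graphLine (schurRoot_ne_zero r) _ _ _ _)
  · exact absurd h (productLine_ne_graphLine (schurRoot_ne_zero r) _ _ _ _)
  · exact absurd h.symm (productLine_ne_graphLine (schurRoot_ne_zero r') _ _ _ _)
  · obtain ⟨ha, -, -, hd⟩ := graphLine_injective h
    obtain rfl : α = α' := Subtype.ext ha
    obtain rfl : ζ = ζ' := Subtype.ext (mul_left_cancel₀ (ne_zero_of_pow_eq_one four_ne_zero α.2) hd)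
    rfl
  · obtain ⟨-, -, hc, -⟩ := graphLine_injective h
    exact absurd hc.symm (by
      simp [h3, ne_zero_of_pow_eq_one three_ne_zero η'.2, ne_zero_of_pow_eq_one four_ne_zero α'.2])
  · exact absurd h.symm (productLine_ne_graphLine (schurRoot_ne_zero r') _ _ _ _)
  · obtain ⟨-, -, hc, -⟩ := graphLine_injective h
    exact absurd hc (by
      simp [h3, ne_zero_of_pow_eq_one three_ne_zero η.2, ne_zero_of_pow_eq_one four_ne_zero α.2])
  · obtain ⟨ha, -, hc, hd⟩ := graphLine_injective h
    obtain rfl : α = α' := Subtype.ext (by simpa [h3] using ha)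
    have hα := ne_zero_of_pow_eq_one four_ne_zero α.2
    obtain rfl : θ = θ' := Subtype.ext (by simpa [h3, hα] using hd)
    have hη : (η : ℂ) ^ 2 = η' ^ 2 := by simpa [h3, hα] using hc
    -- `η = (η²)²` because `η³ = 1`
    obtain rfl : η = η' := Subtype.ext <| by
      linear_combination (η ^ 2 + η' ^ 2 : ℂ) * hη - (η : ℂ) * η.2 + (η' : ℂ) * η'.2
    rfl

/-- the Schur quartic is smooth and contains exactly 64 lines. -/
theorem Schur_smooth_and_64_lines :
    IsSmoothQuartic FSchur ∧ (linesOn FSchur).ncard = 64 := by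
  refine ⟨isSmoothQuartic_FSchur, ?_⟩
  rw [linesOn_FSchur_eq_range_schurLine, Set.ncard_range_of_injective schurLine_injective]
  simp [Complex.card_pow_eq_one]
end
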